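/- (Rate region for perfect three-source codes) Suppose a perfect three-source Slepian-Wolf code for Hamming sources of length n with total rate M exists, with null spaces decomposed as C ⊕ U, C ⊕ V, W where C = the span of all pairwise intersections, and denote the dimensions by c, u, v, w. Then 3n − 2M ≤ c ≤ 3n − 2M + 3 and M − n − 2 ≤ u, v, w ≤ M − n. -/

import Mathlib

/-- Hamming weight of a binary vector. -/
def wt {n : ℕ} (v : Fin n → ZMod 2) : ℕ := (Finset.univ.filter fun j => v j ≠ 0).card

/-- The set of `s`-terminal Hamming sources of length `n`. -/
def hammingS (s n : ℕ) : Set (Fin s → Fin n → ZMod 2) :=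
  {x | ∃ (b : Fin n → ZMod 2) (v : Fin s → Fin n → ZMod 2),
    (∀ i, x i = b + v i) ∧ (∑ i, wt (v i)) ≤ 1}

/-!
The syndrome map is injective on the Hamming sources, so two sources whose differences lie
terminalwise in the null spaces coincide. Applied to constant sources this shows that the three
null spaces meet trivially; by the definition of `C` this forces `C = null H₁ ∩ null H₂`, while
`null H₃` meets the other two null spaces trivially, and Grassmann's formula gives the lower
bounds `c + a ≥ 2n − M` for `a ∈ {u, v, w}`.

For the upper bounds, perturb terminal `k` by a vector of weight at most one, on top of a
common base point taken from the intersection `P` of the other two null spaces: modulo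
`null H_k` these sources stay distinct, which packs `(n + 1) · |P| · |null H_k|` distinct vectors
into `F₂ⁿ`. Surjectivity of the syndrome map gives `2 ^ M ≤ (3n + 1) 2 ^ n`, and together the two
counts yield `c + a ≤ 2n − M + 1`.
-/

open Module Set

section HammingBall

variable {ι : Type*} [Fintype ι] [DecidableEq ι]

lemma eq_zero_or_exists_eq_single_of_hammingNorm_le_one {w : ι → ZMod 2}
    (hw : hammingNorm w ≤ 1) : w = 0 ∨ ∃ i, w = Pi.single i 1 := by
  by_cases hw₀ : w = 0
  · exact Or.inl hw₀
  obtain ⟨i, hi⟩ := Function.ne_iff.mp hw₀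
  refine Or.inr ⟨i, funext fun j => ?_⟩
  rcases eq_or_ne j i with rfl | hji
  · rw [Pi.single_eq_same]
    -- `ZMod 2` is `Fin 2` by definition
    exact Fin.eq_one_of_ne_zero _ hi
  · rw [Pi.single_eq_of_ne hji]
    by_contra hj
    exact hji (Finset.card_le_one.mp hw j (by simpa using hj) i (by simpa using hi))

lemma hammingNorm_single_one (i : ι) : hammingNorm (Pi.single i 1 : ι → ZMod 2) = 1 := by
  rw [hammingNorm, Finset.card_eq_one]
  exact ⟨i, by ext j; by_cases h : j = i <;> simp [h]⟩

lemma setOf_hammingNorm_le_one :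
    {w : ι → ZMod 2 | hammingNorm w ≤ 1} =
      insert 0 (range fun i => (Pi.single i 1 : ι → ZMod 2)) := by
  ext w
  simp only [mem_ofPred_eq, mem_insert_iff, mem_range]
  refine ⟨fun hw => ?_, ?_⟩
  · obtain h | ⟨i, rfl⟩ := eq_zero_or_exists_eq_single_of_hammingNorm_le_one hw
    exacts [Or.inl h, Or.inr ⟨i, rfl⟩]
  · rintro (rfl | ⟨i, rfl⟩)
    exacts [by simp, (hammingNorm_single_one i).le]

lemma ncard_setOf_hammingNorm_le_one :
    {w : ι → ZMod 2 | hammingNorm w ≤ 1}.ncard = Fintype.card ι + 1 := by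
  have hinj : Function.Injective fun i : ι => (Pi.single i 1 : ι → ZMod 2) := fun i j h => by
    by_contra hij
    simpa [Pi.single_eq_of_ne hij] using congrFun h i
  rw [setOf_hammingNorm_le_one, ncard_insert_of_notMem, ncard_range_of_injective hinj,
    Nat.card_eq_fintype_card]
  rintro ⟨i, hi⟩
  simpa using congrFun hi i

end HammingBall

lemma wt_eq_hammingNorm {n : ℕ} (v : Fin n → ZMod 2) : wt v = hammingNorm v := rfl

lemma sum_wt_eq_hammingNorm_uncurry {s n : ℕ} (v : Fin s → Fin n → ZMod 2) :
    ∑ i, wt (v i) = hammingNorm (Function.uncurry v) := by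
  simp only [wt, hammingNorm, Finset.card_filter, Fintype.sum_prod_type]
  rfl

lemma ncard_hammingS_le (s n : ℕ) : (hammingS s n).ncard ≤ 2 ^ n * (s * n + 1) := by
  have hS : hammingS s n ⊆ (fun p : (Fin n → ZMod 2) × (Fin s × Fin n → ZMod 2) =>
      fun i => p.1 + Function.curry p.2 i) '' (univ ×ˢ {w | hammingNorm w ≤ 1}) := by
    rintro x ⟨b, v, hx, hv⟩
    refine ⟨(b, Function.uncurry v), ⟨trivial, ?_⟩, funext fun i => (hx i).symm⟩
    rwa [mem_ofPred_eq, ← sum_wt_eq_hammingNorm_uncurry]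
  calc (hammingS s n).ncard ≤ _ := ncard_le_ncard hS (toFinite _)
    _ ≤ _ := ncard_image_le (toFinite _)
    _ = 2 ^ n * (s * n + 1) := by
      rw [ncard_prod, ncard_univ, ncard_setOf_hammingNorm_le_one]
      simp

lemma add_single_mem_hammingS {s n : ℕ} (b : Fin n → ZMod 2) (k : Fin s)
    {e : Fin n → ZMod 2} (he : hammingNorm e ≤ 1) :
    (fun i => b + (Pi.single k e : Fin s → Fin n → ZMod 2) i) ∈ hammingS s n := by
  refine ⟨b, Pi.single k e, fun _ => rfl, ?_⟩
  rw [Fintype.sum_eq_single k fun i hi => by simp [Pi.single_eq_of_ne hi, wt_eq_hammingNorm]]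
  simpa [wt_eq_hammingNorm] using he

lemma const_mem_hammingS {s n : ℕ} (b : Fin n → ZMod 2) : (fun _ => b) ∈ hammingS s n :=
  ⟨b, 0, fun _ => (add_zero b).symm, by simp [wt_eq_hammingNorm]⟩

def SeparatesHammingSources {s n : ℕ} (K : Fin s → Submodule (ZMod 2) (Fin n → ZMod 2)) : Prop :=
  ∀ x ∈ hammingS s n, ∀ y ∈ hammingS s n, (∀ i, x i - y i ∈ K i) → x = y

namespace SeparatesHammingSources

variable {s n : ℕ} {K : Fin s → Submodule (ZMod 2) (Fin n → ZMod 2)}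

lemma eq_bot_of_forall_le [NeZero s] (hK : SeparatesHammingSources K)
    {P : Submodule (ZMod 2) (Fin n → ZMod 2)} (hP : ∀ i, P ≤ K i) : P = ⊥ :=
  (Submodule.eq_bot_iff P).mpr fun t ht => congrFun (hK _ (const_mem_hammingS t) _
    (const_mem_hammingS 0) fun i => by simpa using hP i ht) 0

lemma succ_mul_two_pow_le [Nontrivial (Fin s)] (hK : SeparatesHammingSources K) (k : Fin s)
    {P : Submodule (ZMod 2) (Fin n → ZMod 2)} (hP : ∀ i ≠ k, P ≤ K i) :
    (n + 1) * 2 ^ (finrank (ZMod 2) P + finrank (ZMod 2) (K k)) ≤ 2 ^ n := by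
  obtain ⟨i, hik⟩ := exists_ne k
  let f : P × {e : Fin n → ZMod 2 | hammingNorm e ≤ 1} × K k → Fin n → ZMod 2 :=
    fun p => p.1 + p.2.1 + p.2.2
  have hf : Function.Injective f := by
    rintro ⟨b, e, z⟩ ⟨b', e', z'⟩ h
    have hsrc := hK _ (add_single_mem_hammingS b k e.2) _ (add_single_mem_hammingS b' k e'.2)
      fun j => by
        rcases eq_or_ne j k with rfl | hjk
        · have : (b + e : Fin n → ZMod 2) - (b' + e') = z' - z :=
            sub_eq_sub_iff_add_eq_add.mpr (h.trans (add_comm _ _))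
          simpa [this] using sub_mem z'.2 z.2
        · simpa [Pi.single_eq_of_ne hjk] using hP j hjk (sub_mem b.2 b'.2)
    have hb : b = b' := Subtype.ext <| by simpa [Pi.single_eq_of_ne hik] using congrFun hsrc i
    subst hb
    have he : e = e' := Subtype.ext <| by simpa using congrFun hsrc k
    subst he
    exact Prod.ext rfl (Prod.ext rfl (Subtype.ext (add_left_cancel h)))
  have hcard := Nat.card_le_card_of_injective f hf
  rw [Nat.card_prod, Nat.card_prod, Nat.card_coe_set_eq, ncard_setOf_hammingNorm_le_one,
    Module.natCard_eq_pow_finrank (K := ZMod 2) (V := P),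
    Module.natCard_eq_pow_finrank (K := ZMod 2) (V := K k), Nat.card_fun] at hcard
  simp only [Fintype.card_fin, Nat.card_eq_fintype_card, ZMod.card] at hcard
  calc (n + 1) * 2 ^ (finrank (ZMod 2) P + finrank (ZMod 2) (K k))
      = 2 ^ finrank (ZMod 2) P * ((n + 1) * 2 ^ finrank (ZMod 2) (K k)) := by ring
    _ ≤ 2 ^ n := hcard

end SeparatesHammingSources

lemma add_le_of_succ_mul_two_pow_le {n a b : ℕ} (ha : (n + 1) * 2 ^ a ≤ 2 ^ n)
    (hb : 2 ^ b ≤ 2 ^ n * (3 * n + 1)) : a + b ≤ 2 * n + 1 := by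
  have hlt : (n + 1) * 2 ^ (a + b) < (n + 1) * 2 ^ (2 * n + 2) :=
    calc (n + 1) * 2 ^ (a + b) = (n + 1) * 2 ^ a * 2 ^ b := by ring
      _ ≤ 2 ^ n * (2 ^ n * (3 * n + 1)) := Nat.mul_le_mul ha hb
      _ < 2 ^ n * (2 ^ n * (4 * (n + 1))) := by gcongr; omega
      _ = (n + 1) * 2 ^ (2 * n + 2) := by ring
  have := (Nat.pow_lt_pow_iff_right (by norm_num)).mp (Nat.lt_of_mul_lt_mul_left hlt)
  omega

lemma Submodule.finrank_add_finrank_le_of_inf_le {K V : Type*} [Field K] [AddCommGroup V]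
    [Module K V] [FiniteDimensional K V] {A B C : Submodule K V} (h : A ⊓ B ≤ C) :
    finrank K A + finrank K B ≤ finrank K V + finrank K C := by
  rw [← Submodule.finrank_sup_add_finrank_inf_eq]
  exact add_le_add (Submodule.finrank_le _) (Submodule.finrank_mono h)

lemma Matrix.finrank_ker_mulVecLin_add {K : Type*} [Field K] {m n : ℕ}
    {H : Matrix (Fin m) (Fin n) K} (hH : Function.Surjective H.mulVecLin) :
    finrank K (LinearMap.ker H.mulVecLin) + m = n := by
  have := LinearMap.finrank_range_add_finrank_ker H.mulVecLin
  rw [LinearMap.range_eq_top.mpr hH, finrank_top, Module.finrank_fin_fun,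
    Module.finrank_fin_fun] at this
  omega

open LinearMap

section ThreeTerminals

variable {n m₁ m₂ m₃ : ℕ} {H₁ : Matrix (Fin m₁) (Fin n) (ZMod 2)}
  {H₂ : Matrix (Fin m₂) (Fin n) (ZMod 2)} {H₃ : Matrix (Fin m₃) (Fin n) (ZMod 2)}

def syndrome (H₁ : Matrix (Fin m₁) (Fin n) (ZMod 2)) (H₂ : Matrix (Fin m₂) (Fin n) (ZMod 2))
    (H₃ : Matrix (Fin m₃) (Fin n) (ZMod 2)) (x : Fin 3 → Fin n → ZMod 2) :
    (Fin m₁ → ZMod 2) × (Fin m₂ → ZMod 2) × (Fin m₃ → ZMod 2) :=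
  (H₁.mulVec (x 0), H₂.mulVec (x 1), H₃.mulVec (x 2))

lemma separatesHammingSources_of_injOn (h : InjOn (syndrome H₁ H₂ H₃) (hammingS 3 n)) :
    SeparatesHammingSources ![ker H₁.mulVecLin, ker H₂.mulVecLin, ker H₃.mulVecLin] :=
  fun _ hx _ hy hxy => h hx hy <| Prod.ext (sub_mem_ker_iff.mp (hxy 0)) <|
    Prod.ext (sub_mem_ker_iff.mp (hxy 1)) (sub_mem_ker_iff.mp (hxy 2))

lemma surjective_mulVecLin_of_surjOn (h : SurjOn (syndrome H₁ H₂ H₃) (hammingS 3 n) univ) :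
    Function.Surjective H₁.mulVecLin ∧ Function.Surjective H₂.mulVecLin ∧
      Function.Surjective H₃.mulVecLin := by
  have hσ : Function.Surjective (syndrome H₁ H₂ H₃) := fun y =>
    (h (mem_univ y)).imp fun _ => And.right
  exact ⟨Function.Surjective.of_comp (g := fun x : Fin 3 → Fin n → ZMod 2 => x 0)
      (Prod.fst_surjective.comp hσ),
    Function.Surjective.of_comp (g := fun x : Fin 3 → Fin n → ZMod 2 => x 1)
      (Prod.fst_surjective.comp (Prod.snd_surjective.comp hσ)),
    Function.Surjective.of_comp (g := fun x : Fin 3 → Fin n → ZMod 2 => x 2)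
      (Prod.snd_surjective.comp (Prod.snd_surjective.comp hσ))⟩

lemma two_pow_le_of_surjOn (h : SurjOn (syndrome H₁ H₂ H₃) (hammingS 3 n) univ) :
    2 ^ (m₁ + m₂ + m₃) ≤ 2 ^ n * (3 * n + 1) :=
  calc 2 ^ (m₁ + m₂ + m₃)
      = (univ : Set ((Fin m₁ → ZMod 2) × (Fin m₂ → ZMod 2) × (Fin m₃ → ZMod 2))).ncard := by
        simp [ncard_univ, pow_add, mul_assoc]
    _ ≤ (syndrome H₁ H₂ H₃ '' hammingS 3 n).ncard := ncard_le_ncard h (toFinite _)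
    _ ≤ (hammingS 3 n).ncard := ncard_image_le (toFinite _)
    _ ≤ 2 ^ n * (3 * n + 1) := ncard_hammingS_le 3 n

lemma finrank_add_le_of_bijOn (h : BijOn (syndrome H₁ H₂ H₃) (hammingS 3 n) univ) (k : Fin 3)
    {P : Submodule (ZMod 2) (Fin n → ZMod 2)}
    (hP : ∀ i ≠ k, P ≤ ![ker H₁.mulVecLin, ker H₂.mulVecLin, ker H₃.mulVecLin] i) :
    finrank (ZMod 2) P +
        finrank (ZMod 2) (![ker H₁.mulVecLin, ker H₂.mulVecLin, ker H₃.mulVecLin] k) +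
      (m₁ + m₂ + m₃) ≤ 2 * n + 1 :=
  add_le_of_succ_mul_two_pow_le
    ((separatesHammingSources_of_injOn h.injOn).succ_mul_two_pow_le k hP)
    (two_pow_le_of_surjOn h.surjOn)

end ThreeTerminals

/-- (Rate region for perfect three-source codes) If a perfect three-source
Slepian-Wolf code for Hamming sources of length `n` with total rate `M` exists,
with null spaces `C ⊕ U`, `C ⊕ V`, `W`, where `C` is the span of the pairwise
intersections of the null spaces, and `c,u,v,w` denote the dimensions, then
`3n − 2M ≤ c ≤ 3n − 2M + 3` and `M − n − 2 ≤ u, v, w ≤ M − n`. -/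
theorem stmt_10 (n M m₁ m₂ m₃ : ℕ) (hM : m₁ + m₂ + m₃ = M)
    (H₁ : Matrix (Fin m₁) (Fin n) (ZMod 2))
    (H₂ : Matrix (Fin m₂) (Fin n) (ZMod 2))
    (H₃ : Matrix (Fin m₃) (Fin n) (ZMod 2))
    (hperf : Set.BijOn
      (fun x : Fin 3 → Fin n → ZMod 2 => (H₁.mulVec (x 0), H₂.mulVec (x 1), H₃.mulVec (x 2)))
      (hammingS 3 n) Set.univ)
    (C U V W : Submodule (ZMod 2) (Fin n → ZMod 2))
    (hC : C = (LinearMap.ker H₂.mulVecLin ⊓ LinearMap.ker H₃.mulVecLin) ⊔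
              (LinearMap.ker H₁.mulVecLin ⊓ LinearMap.ker H₃.mulVecLin) ⊔
              (LinearMap.ker H₁.mulVecLin ⊓ LinearMap.ker H₂.mulVecLin))
    (h1 : LinearMap.ker H₁.mulVecLin = C ⊔ U) (h1' : C ⊓ U = ⊥)
    (h2 : LinearMap.ker H₂.mulVecLin = C ⊔ V) (h2' : C ⊓ V = ⊥)
    (h3 : LinearMap.ker H₃.mulVecLin = W)
    (c u v w : ℕ)
    (hc : c = Module.finrank (ZMod 2) C) (hu : u = Module.finrank (ZMod 2) U)
    (hv : v = Module.finrank (ZMod 2) V) (hw : w = Module.finrank (ZMod 2) W) :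
    (3 * (n : ℤ) - 2 * M ≤ c ∧ (c : ℤ) ≤ 3 * n - 2 * M + 3) ∧
    ((M : ℤ) - n - 2 ≤ u ∧ (u : ℤ) ≤ M - n) ∧
    ((M : ℤ) - n - 2 ≤ v ∧ (v : ℤ) ≤ M - n) ∧
    ((M : ℤ) - n - 2 ≤ w ∧ (w : ℤ) ≤ M - n) := by
  obtain ⟨hs₁, hs₂, hs₃⟩ := surjective_mulVecLin_of_surjOn hperf.surjOn
  have hsep := separatesHammingSources_of_injOn hperf.injOn
  have hC₁ : C ≤ ker H₁.mulVecLin := h1 ▸ le_sup_left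
  have hC₂ : C ≤ ker H₂.mulVecLin := h2 ▸ le_sup_left
  have h₁₃ : ker H₁.mulVecLin ⊓ ker H₃.mulVecLin = ⊥ := hsep.eq_bot_of_forall_le <| by
    simp [Fin.forall_fin_succ, (hC ▸ le_sup_right.trans le_sup_left : _ ≤ C).trans hC₂]
  have h₂₃ : ker H₂.mulVecLin ⊓ ker H₃.mulVecLin = ⊥ := hsep.eq_bot_of_forall_le <| by
    simp [Fin.forall_fin_succ, (hC ▸ le_sup_left.trans le_sup_left : _ ≤ C).trans hC₁]
  have hK₁ : finrank (ZMod 2) (ker H₁.mulVecLin) = c + u := by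
    rw [hc, hu, ← Submodule.finrank_sup_add_finrank_inf_eq, h1', finrank_bot, add_zero, h1]
  have hK₂ : finrank (ZMod 2) (ker H₂.mulVecLin) = c + v := by
    rw [hc, hv, ← Submodule.finrank_sup_add_finrank_inf_eq, h2', finrank_bot, add_zero, h2]
  have hK₃ : finrank (ZMod 2) (ker H₃.mulVecLin) = w := by rw [hw, h3]
  have hd₁ : c + u + m₁ = n := hK₁ ▸ Matrix.finrank_ker_mulVecLin_add hs₁
  have hd₂ : c + v + m₂ = n := hK₂ ▸ Matrix.finrank_ker_mulVecLin_add hs₂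
  have hd₃ : w + m₃ = n := hK₃ ▸ Matrix.finrank_ker_mulVecLin_add hs₃
  have hl₁₂ : c + u + (c + v) ≤ n + c := by
    have h := Submodule.finrank_add_finrank_le_of_inf_le (hC ▸ le_sup_right : _ ≤ C)
    rwa [Module.finrank_fin_fun, hK₁, hK₂, ← hc] at h
  have hl₁₃ : c + u + w ≤ n := by
    have h := Submodule.finrank_add_finrank_le_of_disjoint (disjoint_iff.mpr h₁₃)
    rwa [Module.finrank_fin_fun, hK₁, hK₃] at h
  have hl₂₃ : c + v + w ≤ n := by
    have h := Submodule.finrank_add_finrank_le_of_disjoint (disjoint_iff.mpr h₂₃)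
    rwa [Module.finrank_fin_fun, hK₂, hK₃] at h
  have hu₁ : c + u + M ≤ 2 * n + 1 := by
    have h := finrank_add_le_of_bijOn hperf 0 (P := ⊥) fun _ _ => bot_le
    rw [finrank_bot, zero_add] at h
    rwa [← hK₁, ← hM]
  have hu₂ : c + v + M ≤ 2 * n + 1 := by
    have h := finrank_add_le_of_bijOn hperf 1 (P := ⊥) fun _ _ => bot_le
    rw [finrank_bot, zero_add] at h
    rwa [← hK₂, ← hM]
  have hu₃ : c + w + M ≤ 2 * n + 1 := by
    rw [hc, ← hK₃, ← hM]
    exact finrank_add_le_of_bijOn hperf 2 (by simp [Fin.forall_fin_succ, hC₁, hC₂])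
  omega
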